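/- arXiv:1708.05647 — 5 statements merged into one kernel-verified Lean document; each statement's English description precedes it below -/
import Mathlib

section
/- Let D ⊆ ℝ^r be a union of linear subspaces, each of which contains the vector (1,1,...,1). Then the intersection ∂[0,1]^r ∩ D of D with the boundary of the unit cube is homeomorphic to the intersection S^{r-1} ∩ D of D with the unit sphere in ℝ^r. -/
/-!
The cube is a convex bounded neighbourhood of its centre `c = ½𝟙`, and `c` lies in every
subspace of `ℋ`. Translating by `-c` and then rescaling along rays (`gaugeRescale`, which carries
the frontier of one convex bounded neighbourhood of `0` onto that of another) is a homeomorphism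
of `ℝ^r` taking `∂[0,1]^r` onto `S^{r-1}`; both moves preserve `D`, because each subspace
contains `c` and is closed under scaling.
-/

open Set Metric Bornology Topology Pointwise

def Homeomorph.interOfImageEq {X Y : Type*} [TopologicalSpace X] [TopologicalSpace Y]
    (e : X ≃ₜ Y) {A K : Set X} {B L : Set Y} (hA : e '' A = B) (hK : e '' K = L) :
    ↥(A ∩ K) ≃ₜ ↥(B ∩ L) :=
  (e.image (A ∩ K)).trans (.setCongr (by rw [image_inter e.injective, hA, hK]))

theorem Homeomorph.image_eq_self_of_mapsTo {X : Type*} [TopologicalSpace X] (e : X ≃ₜ X)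
    {K : Set X} (h : MapsTo e K K) (h_symm : MapsTo e.symm K K) : e '' K = K :=
  h.image_subset.antisymm fun y hy ↦ ⟨e.symm y, h_symm hy, e.apply_symm_apply y⟩

section TopologicalVectorSpace

variable {E : Type*} [AddCommGroup E] [Module ℝ E] [TopologicalSpace E]
  [IsTopologicalAddGroup E] [ContinuousSMul ℝ E] [T1Space E] {s t : Set E}

theorem image_gaugeRescaleHomeomorph_frontier
    (hsc : Convex ℝ s) (hs₀ : s ∈ 𝓝 0) (hsb : IsVonNBounded ℝ s)
    (htc : Convex ℝ t) (ht₀ : t ∈ 𝓝 0) (htb : IsVonNBounded ℝ t) :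
    gaugeRescaleHomeomorph s t hsc hs₀ hsb htc ht₀ htb '' frontier s = frontier t := by
  rw [← closure_sdiff_interior, image_sdiff (Homeomorph.injective _),
    image_gaugeRescaleHomeomorph_closure, image_gaugeRescaleHomeomorph_interior,
    closure_sdiff_interior]

theorem nonempty_homeomorph_frontier_inter_of_convex
    (hsc : Convex ℝ s) (hs₀ : s ∈ 𝓝 0) (hsb : IsVonNBounded ℝ s)
    (htc : Convex ℝ t) (ht₀ : t ∈ 𝓝 0) (htb : IsVonNBounded ℝ t)
    {K : Set E} (hK : ∀ x ∈ K, ∀ a : ℝ, 0 ≤ a → a • x ∈ K) :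
    Nonempty (↥(frontier s ∩ K) ≃ₜ ↥(frontier t ∩ K)) := by
  have gaugeRescale_mem (u v : Set E) : MapsTo (gaugeRescale u v) K K := fun x hx ↦
    hK x hx _ (div_nonneg (gauge_nonneg x) (gauge_nonneg x))
  let e := gaugeRescaleHomeomorph s t hsc hs₀ hsb htc ht₀ htb
  exact ⟨e.interOfImageEq (image_gaugeRescaleHomeomorph_frontier ..)
    (e.image_eq_self_of_mapsTo (gaugeRescale_mem s t) (gaugeRescale_mem t s))⟩

end TopologicalVectorSpace

section NormedSpace

variable {E : Type*} [NormedAddCommGroup E] [NormedSpace ℝ E]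

theorem smul_add_smul_mem_biUnion_submodule {ℋ : Set (Submodule ℝ E)} {c x : E}
    (hc : ∀ H ∈ ℋ, c ∈ H) (hx : x ∈ ⋃ H ∈ ℋ, (H : Set E)) (a b : ℝ) :
    a • x + b • c ∈ ⋃ H ∈ ℋ, (H : Set E) := by
  simp only [mem_iUnion, SetLike.mem_coe] at hx ⊢
  obtain ⟨H, hH, hxH⟩ := hx
  exact ⟨H, hH, H.add_mem (H.smul_mem a hxH) (H.smul_mem b (hc H hH))⟩

theorem nonempty_homeomorph_frontier_inter_sphere_inter {s : Set E} {c : E}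
    (hsc : Convex ℝ s) (hs : s ∈ 𝓝 c) (hsb : IsBounded s)
    {ℋ : Set (Submodule ℝ E)} (hc : ∀ H ∈ ℋ, c ∈ H) :
    Nonempty (↥(frontier s ∩ ⋃ H ∈ ℋ, (H : Set E)) ≃ₜ
      ↥(sphere (0 : E) 1 ∩ ⋃ H ∈ ℋ, (H : Set E))) := by
  set D := ⋃ H ∈ ℋ, (H : Set E)
  have hD : ∀ x ∈ D, ∀ a b : ℝ, a • x + b • c ∈ D := fun x hx ↦
    smul_add_smul_mem_biUnion_submodule hc hx
  let τ := Homeomorph.addLeft (-c)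
  have hτ : τ '' D = D := by
    refine τ.image_eq_self_of_mapsTo (fun x hx ↦ ?_) (fun x hx ↦ ?_)
    · simpa [τ, add_comm] using hD x hx 1 (-1)
    · simpa [τ, Homeomorph.addLeft_symm, add_comm] using hD x hx 1 1
  have hτs : τ '' frontier s = frontier (-c +ᵥ s) := by
    rw [τ.image_frontier, ← image_vadd]; rfl
  obtain ⟨g⟩ := nonempty_homeomorph_frontier_inter_of_convex (hsc.vadd (-c))
    (by simpa using vadd_mem_nhds_vadd (-c) hs)
    (NormedSpace.isVonNBounded_of_isBounded ℝ (hsb.vadd (-c)))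
    (convex_ball 0 1) (ball_mem_nhds 0 one_pos) (NormedSpace.isVonNBounded_ball ℝ E 1)
    (fun x hx a _ ↦ by simpa using hD x hx a 0)
  rw [frontier_ball 0 one_ne_zero] at g
  exact ⟨(τ.interOfImageEq hτs hτ).trans g⟩

end NormedSpace

section Box

variable {ι : Type*} {a b : ℝ}

theorem euclideanSpace_box_eq_preimage :
    {x : EuclideanSpace ℝ ι | ∀ i, x i ∈ Icc a b} =
      WithLp.ofLp ⁻¹' univ.pi fun _ ↦ Icc a b := by
  ext x; exact mem_univ_pi.symm

theorem convex_euclideanSpace_box :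
    Convex ℝ {x : EuclideanSpace ℝ ι | ∀ i, x i ∈ Icc a b} := by
  rw [euclideanSpace_box_eq_preimage]
  exact (convex_pi fun _ _ ↦ convex_Icc a b).linear_preimage
    (WithLp.linearEquiv 2 ℝ (ι → ℝ)).toLinearMap

theorem isBounded_euclideanSpace_box [Fintype ι] :
    IsBounded {x : EuclideanSpace ℝ ι | ∀ i, x i ∈ Icc a b} := by
  rw [euclideanSpace_box_eq_preimage]
  exact (PiLp.antilipschitzWith_ofLp 2 _).isBounded_preimage
    (isCompact_univ_pi fun _ ↦ isCompact_Icc).isBounded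

theorem euclideanSpace_box_mem_nhds [Finite ι] {x : EuclideanSpace ℝ ι}
    (hx : ∀ i, x i ∈ Ioo a b) :
    {x : EuclideanSpace ℝ ι | ∀ i, x i ∈ Icc a b} ∈ 𝓝 x := by
  rw [euclideanSpace_box_eq_preimage]
  exact (PiLp.continuous_ofLp 2 _).continuousAt.preimage_mem_nhds <|
    set_pi_mem_nhds finite_univ fun i _ ↦ Icc_mem_nhds (hx i).1 (hx i).2

end Box

/-- Let `D ⊆ ℝ^r` be a finite union of linear subspaces, each containing the
all-ones vector `𝟙`.  Then `∂[0,1]^r ∩ D` is homeomorphic to `S^{r-1} ∩ D`, where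
`∂[0,1]^r` is the boundary of the unit cube and `S^{r-1}` the unit sphere in `ℝ^r`. -/
theorem cubeBoundary_inter_homeomorph_sphere_inter
    (r : ℕ) (ℋ : Finset (Submodule ℝ (EuclideanSpace ℝ (Fin r))))
    (hones : ∀ H ∈ ℋ, WithLp.toLp 2 (fun _ : Fin r => (1 : ℝ)) ∈ H) :
    Nonempty
      (↥(frontier {x : EuclideanSpace ℝ (Fin r) | ∀ i, x i ∈ Set.Icc (0 : ℝ) 1} ∩
          (⋃ H ∈ ℋ, (H : Set (EuclideanSpace ℝ (Fin r))))) ≃ₜ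
        ↥(Metric.sphere (0 : EuclideanSpace ℝ (Fin r)) 1 ∩
          (⋃ H ∈ ℋ, (H : Set (EuclideanSpace ℝ (Fin r)))))) := by
  set c : EuclideanSpace ℝ (Fin r) := (1 / 2 : ℝ) • WithLp.toLp 2 (fun _ ↦ 1)
  have hc : ∀ i, c i ∈ Ioo (0 : ℝ) 1 := fun i ↦ by norm_num [c]
  exact nonempty_homeomorph_frontier_inter_sphere_inter convex_euclideanSpace_box
    (euclideanSpace_box_mem_nhds hc) isBounded_euclideanSpace_box
    fun H hH ↦ H.smul_mem _ (hones H hH)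
end

section
/- Let S = {x ∈ [0,1]^r : min_i x_i = 0 and max_i x_i = 1} for r ≥ 2. Then S is homeomorphic to the sphere S^{r-2}. -/
/-! Translating a point of `S ⊆ ℝ^(n+2)` so that its first coordinate vanishes and dropping that
coordinate identifies `S` with the unit level set of `y ↦ max (0, y) - min (0, y)` on `ℝ^(n+1)`;
the inverse translates back by the minimum. This function is a norm, so its unit ball is a
bounded convex body with nonempty interior, and the frontier of such a body — here the unit
level set — is homeomorphic to the Euclidean unit sphere by radial rescaling. -/

open Set Metric

theorem Seminorm.frontier_ball_zero_one {E : Type*} [AddCommGroup E] [Module ℝ E]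
    [TopologicalSpace E] [IsTopologicalAddGroup E] [ContinuousSMul ℝ E]
    (p : Seminorm ℝ E) (hp : Continuous p) :
    frontier (p.ball 0 1) = {x | p x = 1} := by
  ext x
  rw [← gauge_eq_one_iff_mem_frontier (p.convex_ball 0 1) (p.ball_mem_nhds hp one_pos),
    p.gauge_ball]
  rfl

theorem Seminorm.nonempty_homeomorph_sphere {E : Type*} [NormedAddCommGroup E] [NormedSpace ℝ E]
    (p : Seminorm ℝ E) (hp : Continuous p) (hb : Bornology.IsBounded (p.ball 0 1)) :
    Nonempty ({x | p x = 1} ≃ₜ sphere (0 : E) 1) := by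
  have hne : (interior (p.ball 0 1)).Nonempty :=
    ⟨0, mem_interior_iff_mem_nhds.2 (p.ball_mem_nhds hp one_pos)⟩
  obtain ⟨h, -, -, hfr⟩ :=
    exists_homeomorph_image_interior_closure_frontier_eq_unitBall (p.convex_ball 0 1) hne hb
  rw [p.frontier_ball_zero_one hp] at hfr
  exact ⟨(h.image _).trans (.setCongr hfr)⟩

section Oscillation

variable {ι : Type*} [Fintype ι]

variable (ι) in
/-- The oscillation `max z - min z`, written as the sup norm of all pairwise differences so that
it is visibly a seminorm. -/
noncomputable def oscSeminorm : Seminorm ℝ (ι → ℝ) :=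
  (normSeminorm ℝ (ι × ι → ℝ)).comp
    (LinearMap.pi (R := ℝ) (φ := fun _ : ι × ι => ℝ) fun q =>
      LinearMap.proj (R := ℝ) (φ := fun _ : ι => ℝ) q.1 - LinearMap.proj q.2)

lemma oscSeminorm_apply (z : ι → ℝ) :
    oscSeminorm ι z = ‖fun q : ι × ι => z q.1 - z q.2‖ := rfl

lemma abs_sub_le_oscSeminorm (z : ι → ℝ) (i j : ι) : |z i - z j| ≤ oscSeminorm ι z :=
  norm_le_pi_norm (fun q : ι × ι => z q.1 - z q.2) (i, j)

lemma continuous_oscSeminorm : Continuous (oscSeminorm ι) :=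
  show Continuous fun z : ι → ℝ => ‖fun q : ι × ι => z q.1 - z q.2‖ from
    continuous_norm.comp (continuous_pi fun q => (continuous_apply q.1).sub (continuous_apply q.2))

lemma oscSeminorm_eq_ciSup_sub_ciInf [Nonempty ι] (z : ι → ℝ) :
    oscSeminorm ι z = (⨆ i, z i) - ⨅ i, z i := by
  have hle : ∀ i, z i ≤ ⨆ i, z i := le_ciSup (Set.finite_range z).bddAbove
  have hge : ∀ i, ⨅ i, z i ≤ z i := ciInf_le (Set.finite_range z).bddBelow
  obtain ⟨i, hi⟩ := exists_eq_ciSup_of_finite (f := z)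
  obtain ⟨j, hj⟩ := exists_eq_ciInf_of_finite (f := z)
  refine le_antisymm ?_ (hi ▸ hj ▸ (le_abs_self _).trans (abs_sub_le_oscSeminorm z i j))
  refine (pi_norm_le_iff_of_nonneg (x := fun q : ι × ι => z q.1 - z q.2)
    (sub_nonneg.2 ((hge i).trans (hle i)))).2 fun q => ?_
  exact abs_sub_le_iff.2 ⟨by linarith [hle q.1, hge q.2], by linarith [hle q.2, hge q.1]⟩

lemma oscSeminorm_sub_const (z : ι → ℝ) (c : ℝ) :
    oscSeminorm ι (fun i => z i - c) = oscSeminorm ι z := by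
  simp only [oscSeminorm_apply, sub_sub_sub_cancel_right]

end Oscillation

section GlobalPathSpace

variable {ι : Type*}

def globalPathSpace (ι : Type*) : Set (EuclideanSpace ℝ ι) :=
  {x | (∀ i, x i ∈ Icc (0 : ℝ) 1) ∧ (∃ i, x i = 0) ∧ (∃ i, x i = 1)}

noncomputable def subInf (z : ι → ℝ) : ι → ℝ := fun i => z i - ⨅ k, z k

lemma subInf_sub_const [Finite ι] [Nonempty ι] (z : ι → ℝ) (c : ℝ) :
    subInf (fun i => z i - c) = subInf z := by
  have h := (OrderIso.subRight c).map_ciInf (Set.finite_range z).bddBelow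
  funext i
  simp only [subInf, OrderIso.subRight_apply] at h ⊢
  rw [← h]
  ring

lemma continuous_subInf [Fintype ι] [Nonempty ι] :
    Continuous (subInf : (ι → ℝ) → ι → ℝ) := by
  have h : Continuous fun z : ι → ℝ => Finset.univ.inf' Finset.univ_nonempty (z ·) :=
    Continuous.finset_inf'_apply _ fun i _ => continuous_apply i
  simp only [Finset.inf'_univ_eq_ciInf] at h
  exact continuous_pi fun i => (continuous_apply i).sub h

lemma ciInf_eq_zero_of_mem_globalPathSpace [Finite ι] {x : EuclideanSpace ℝ ι}
    (hx : x ∈ globalPathSpace ι) : ⨅ i, x i = 0 := by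
  obtain ⟨h01, ⟨i, hi⟩, -⟩ := hx
  have : Nonempty ι := ⟨i⟩
  exact le_antisymm (hi ▸ ciInf_le (Set.finite_range _).bddBelow i) (le_ciInf fun i => (h01 i).1)

lemma ciSup_eq_one_of_mem_globalPathSpace [Finite ι] {x : EuclideanSpace ℝ ι}
    (hx : x ∈ globalPathSpace ι) : ⨆ i, x i = 1 := by
  obtain ⟨h01, -, ⟨i, hi⟩⟩ := hx
  have : Nonempty ι := ⟨i⟩
  exact le_antisymm (ciSup_le fun i => (h01 i).2) (hi ▸ le_ciSup (Set.finite_range _).bddAbove i)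

lemma oscSeminorm_eq_one_of_mem_globalPathSpace [Fintype ι] {x : EuclideanSpace ℝ ι}
    (hx : x ∈ globalPathSpace ι) : oscSeminorm ι x = 1 := by
  have : Nonempty ι := ⟨hx.2.1.choose⟩
  rw [oscSeminorm_eq_ciSup_sub_ciInf, ciSup_eq_one_of_mem_globalPathSpace hx,
    ciInf_eq_zero_of_mem_globalPathSpace hx, sub_zero]

lemma subInf_eq_self_of_mem_globalPathSpace [Finite ι] {x : EuclideanSpace ℝ ι}
    (hx : x ∈ globalPathSpace ι) : subInf x = x := by
  funext i
  simp only [subInf, ciInf_eq_zero_of_mem_globalPathSpace hx, sub_zero]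

lemma toLp_subInf_mem_globalPathSpace [Fintype ι] [Nonempty ι] {z : ι → ℝ}
    (hz : oscSeminorm ι z = 1) :
    WithLp.toLp 2 (subInf z) ∈ globalPathSpace ι := by
  rw [oscSeminorm_eq_ciSup_sub_ciInf] at hz
  have hle : ∀ i, z i ≤ ⨆ i, z i := le_ciSup (Set.finite_range z).bddAbove
  have hge : ∀ i, ⨅ i, z i ≤ z i := ciInf_le (Set.finite_range z).bddBelow
  obtain ⟨i, hi⟩ := exists_eq_ciSup_of_finite (f := z)
  obtain ⟨j, hj⟩ := exists_eq_ciInf_of_finite (f := z)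
  refine ⟨fun k => ⟨?_, ?_⟩, ⟨j, ?_⟩, ⟨i, ?_⟩⟩ <;> simp only [subInf]
  · linarith [hge k]
  · linarith [hle k]
  · linarith
  · linarith

end GlobalPathSpace

section DropFirst

variable {n : ℕ}

variable (n) in
noncomputable def consZero : EuclideanSpace ℝ (Fin n) →ₗ[ℝ] (Fin (n + 1) → ℝ) :=
  (Fin.consLinearEquiv ℝ fun _ => ℝ).toLinearMap ∘ₗ LinearMap.inr ℝ ℝ _ ∘ₗ
    (WithLp.linearEquiv 2 ℝ _).toLinearMap

lemma consZero_apply (y : EuclideanSpace ℝ (Fin n)) : consZero n y = Fin.cons 0 y := rfl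

variable (n) in
noncomputable def oscWithZero : Seminorm ℝ (EuclideanSpace ℝ (Fin n)) :=
  (oscSeminorm (Fin (n + 1))).comp (consZero n)

lemma continuous_oscWithZero : Continuous (oscWithZero n) :=
  continuous_oscSeminorm.comp (consZero n).continuous_of_finiteDimensional

lemma isBounded_ball_oscWithZero : Bornology.IsBounded ((oscWithZero n).ball 0 1) := by
  refine ((PiLp.antilipschitzWith_ofLp 2 _).isBounded_preimage
    (isBounded_closedBall (x := 0) (r := 1))).subset fun y hy => ?_
  rw [Seminorm.mem_ball_zero] at hy
  refine mem_closedBall_zero_iff.2 ((pi_norm_le_iff_of_nonneg zero_le_one).2 fun j => ?_)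
  have := abs_sub_le_oscSeminorm (consZero n y) j.succ 0
  simp only [consZero_apply, Fin.cons_succ, Fin.cons_zero, sub_zero] at this
  exact this.trans hy.le

noncomputable def dropFirst (x : EuclideanSpace ℝ (Fin (n + 1))) : EuclideanSpace ℝ (Fin n) :=
  WithLp.toLp 2 fun j => x j.succ - x 0

lemma consZero_dropFirst (x : EuclideanSpace ℝ (Fin (n + 1))) :
    consZero n (dropFirst x) = fun i => x i - x 0 := by
  funext i
  cases i using Fin.cases <;> simp [consZero_apply, dropFirst]

lemma oscWithZero_dropFirst (x : EuclideanSpace ℝ (Fin (n + 1))) :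
    oscWithZero n (dropFirst x) = oscSeminorm (Fin (n + 1)) x := by
  rw [oscWithZero, Seminorm.comp_apply, consZero_dropFirst, oscSeminorm_sub_const]

lemma dropFirst_toLp_subInf (z : Fin (n + 1) → ℝ) (hz : z 0 = 0) :
    dropFirst (WithLp.toLp 2 (subInf z)) = WithLp.toLp 2 fun j => z j.succ := by
  ext j
  simp [dropFirst, subInf, hz]

variable (n) in
noncomputable def globalPathSpaceHomeomorph :
    globalPathSpace (Fin (n + 2)) ≃ₜ
      {y : EuclideanSpace ℝ (Fin (n + 1)) | oscWithZero (n + 1) y = 1} where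
  toFun x := ⟨dropFirst x,
    (oscWithZero_dropFirst x.1).trans (oscSeminorm_eq_one_of_mem_globalPathSpace x.2)⟩
  invFun y := ⟨WithLp.toLp 2 (subInf (consZero _ y)), toLp_subInf_mem_globalPathSpace y.2⟩
  left_inv x := by
    ext1
    simp only [consZero_dropFirst, subInf_sub_const, subInf_eq_self_of_mem_globalPathSpace x.2]
  right_inv y := by
    ext1
    exact dropFirst_toLp_subInf _ rfl
  continuous_toFun := by
    refine Continuous.subtype_mk ?_ _
    unfold dropFirst
    fun_prop
  continuous_invFun := by
    refine Continuous.subtype_mk ?_ _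
    exact (PiLp.continuous_toLp 2 _).comp (continuous_subInf.comp
      ((consZero _).continuous_of_finiteDimensional.comp continuous_subtype_val))

end DropFirst

/-- For `r ≥ 2`, the "global path space"
`S = {x ∈ [0,1]^r : min_i x_i = 0 and max_i x_i = 1}` (points of the unit cube with at least
one coordinate equal to `0` and at least one coordinate equal to `1`) is homeomorphic to the
standard sphere `S^{r-2}`, realized as the unit sphere in `ℝ^{r-1}`. -/
theorem globalPathSpace_homeomorph_sphere (r : ℕ) (hr : 2 ≤ r) :
    Nonempty
      (↥{x : EuclideanSpace ℝ (Fin r) |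
          (∀ i, x i ∈ Set.Icc (0 : ℝ) 1) ∧ (∃ i, x i = 0) ∧ (∃ i, x i = 1)} ≃ₜ
        Metric.sphere (0 : EuclideanSpace ℝ (Fin (r - 1))) 1) := by
  obtain ⟨n, rfl⟩ : ∃ n, r = n + 2 := ⟨r - 2, by omega⟩
  obtain ⟨e⟩ := (oscWithZero (n + 1)).nonempty_homeomorph_sphere continuous_oscWithZero
    isBounded_ball_oscWithZero
  exact ⟨(globalPathSpaceHomeomorph n).trans e⟩
end

section
/- Let u = (u_1,...,u_r) ∈ (0,1]^r with u_1 ≤ u_2 ≤ ... ≤ u_r. Then the lexicographic ordering of the facets of Δ_u (each facet identified with its increasing tuple of vertices) is a shelling: for every pair of facets C_a ≺ C_k there exist a facet C_b ≺ C_k and an element x ∈ C_k such that C_a ∩ C_k ⊆ C_b ∩ C_k = C_k \ {x}. -/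
/-! If `C_a ≺ C_k`, some `s ∈ C_a \ C_k` lies below every `x ∈ C_k \ C_a`. Since `u` is monotone,
exchanging `x` for `s` does not decrease the weight of the complement of `C_k`, so
`(C_k \ {x}) ∪ {s}` is a face.
A facet `C_b` containing it misses `x` (as `C_k` is maximal), hence `C_b ∩ C_k = C_k \ {x}`,
and `C_b ≺ C_k` because `s ∈ C_b \ C_k` lies below `x`, the only element of `C_k \ C_b`. -/

open Finset

variable {r : ℕ}

/-- `F` is a face of the induced complex `Δ_u`: the complement of `F` has `u`-weight `> 1`. -/
def IsFaceOf (u : Fin r → ℝ) (F : Finset (Fin r)) : Prop := 1 < ∑ i ∈ Fᶜ, u i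

/-- `C` is a facet (maximal face) of `Δ_u`. -/
def IsFacetOf (u : Fin r → ℝ) (C : Finset (Fin r)) : Prop :=
  IsFaceOf u C ∧ ∀ F : Finset (Fin r), IsFaceOf u F → C ⊆ F → F = C

/-- The lexicographic order on facets, comparing the increasing lists of their vertices. -/
def FacetLex (C C' : Finset (Fin r)) : Prop :=
  List.Lex (· < ·) (C.sort (· ≤ ·)) (C'.sort (· ≤ ·))

theorem List.Lex.exists_forall_lt_of_not_subset {α : Type*} [LinearOrder α] {l₁ l₂ : List α}
    (h : List.Lex (· < ·) l₁ l₂) (h₁ : l₁.Pairwise (· < ·)) (h₂ : l₂.Pairwise (· < ·))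
    (hsub : ¬ l₁ ⊆ l₂) : ∃ a ∈ l₁, a ∉ l₂ ∧ ∀ b ∈ l₂, b ∉ l₁ → a < b := by
  induction h with
  | nil => exact absurd (List.nil_subset _) hsub
  | @cons a t₁ t₂ _ ih =>
    rw [List.pairwise_cons] at h₁ h₂
    obtain ⟨m, hm, hmt₂, hlt⟩ := ih h₁.2 h₂.2 fun h => hsub (List.cons_subset_cons a h)
    have ham : a ≠ m := (h₁.1 m hm).ne
    refine ⟨m, List.mem_cons_of_mem a hm, by simp [hmt₂, ham.symm], fun b hb hbt₁ => ?_⟩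
    simp only [List.mem_cons, not_or] at hb hbt₁
    exact hlt b (hb.resolve_left hbt₁.1) hbt₁.2
  | @rel a t₁ b t₂ hab =>
    have hb : ∀ c ∈ b :: t₂, a < c := by
      rw [List.pairwise_cons] at h₂
      simpa [hab] using fun c hc => hab.trans (h₂.1 c hc)
    exact ⟨a, List.mem_cons_self, fun ha => (hb a ha).false, fun c hc _ => hb c hc⟩

namespace Finset

variable {α : Type*} [LinearOrder α] {A B : Finset α}

theorem exists_forall_lt_of_lex_sort (h : List.Lex (· < ·) (A.sort (· ≤ ·)) (B.sort (· ≤ ·)))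
    (hAB : ¬ A ⊆ B) : ∃ a ∈ A \ B, ∀ b ∈ B \ A, a < b := by
  obtain ⟨a, ha, haB, hlt⟩ := h.exists_forall_lt_of_not_subset (sortedLT_sort A).pairwise
    (sortedLT_sort B).pairwise fun h => hAB fun x hx => by simpa using h (by simpa using hx)
  simp only [mem_sort] at ha haB hlt
  exact ⟨a, mem_sdiff.2 ⟨ha, haB⟩, fun b hb => hlt b (mem_sdiff.1 hb).1 (mem_sdiff.1 hb).2⟩

theorem lex_sort_iff_exists_forall_lt (hAB : ¬ A ⊆ B) (hBA : ¬ B ⊆ A) :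
    List.Lex (· < ·) (A.sort (· ≤ ·)) (B.sort (· ≤ ·)) ↔ ∃ a ∈ A \ B, ∀ b ∈ B \ A, a < b := by
  refine ⟨fun h => exists_forall_lt_of_lex_sort h hAB, fun ⟨a, ha, hlt⟩ => ?_⟩
  rcases Std.Trichotomous.rel_or_eq_or_rel_swap (r := List.Lex (· < ·))
    (a := A.sort (· ≤ ·)) (b := B.sort (· ≤ ·)) with h | h | h
  · exact h
  · exact absurd (by rw [← sort_toFinset A (· ≤ ·), h, sort_toFinset]) hAB
  · obtain ⟨b, hb, hba⟩ := exists_forall_lt_of_lex_sort h hBA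
    exact absurd (hlt b hb) (hba a ha).asymm

end Finset

section Facets

variable {u : Fin r → ℝ} {C D : Finset (Fin r)}

theorem IsFaceOf.exists_facet_superset (hC : IsFaceOf u C) : ∃ D, IsFacetOf u D ∧ C ⊆ D := by
  obtain ⟨D, hCD, hD⟩ :=
    Set.toFinite {F | IsFaceOf u F ∧ C ⊆ F} |>.exists_le_maximal ⟨hC, subset_rfl⟩
  exact ⟨D, ⟨hD.prop.1, fun F hF hDF => (hD.eq_of_le ⟨hF, hCD.trans hDF⟩ hDF).symm⟩, hCD⟩

theorem IsFaceOf.insert_erase {s x : Fin r} (hC : IsFaceOf u C) (hs : s ∉ C) (hx : x ∈ C)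
    (hsx : u s ≤ u x) : IsFaceOf u (insert s (C.erase x)) := by
  have hsx' : s ∈ insert x Cᶜ := mem_insert_of_mem (mem_compl.2 hs)
  unfold IsFaceOf at hC ⊢
  rw [compl_insert, compl_erase, sum_erase_eq_sub hsx', sum_insert (by simpa using hx)]
  linarith

theorem IsFacetOf.not_subset (hC : IsFacetOf u C) (hD : IsFacetOf u D) (hCD : C ≠ D) :
    ¬ C ⊆ D :=
  fun h => hCD (hC.2 D hD.1 h).symm

theorem IsFacetOf.inter_eq_erase {x : Fin r} (hC : IsFacetOf u C) (hD : IsFaceOf u D)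
    (hDC : D ≠ C) (hsub : C.erase x ⊆ D) : D ∩ C = C.erase x := by
  have hxD : x ∉ D := fun hx => hDC <| hC.2 D hD fun y hy => by
    by_cases hyx : y = x
    · exact hyx ▸ hx
    · exact hsub (mem_erase.2 ⟨hyx, hy⟩)
  ext y
  simp only [mem_inter, mem_erase]
  exact ⟨fun h => ⟨fun hyx => hxD (hyx ▸ h.1), h.2⟩, fun h => ⟨hsub (mem_erase.2 h), h.2⟩⟩

theorem IsFacetOf.facetLex_iff (hC : IsFacetOf u C) (hD : IsFacetOf u D) (hCD : C ≠ D) :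
    FacetLex C D ↔ ∃ a ∈ C \ D, ∀ b ∈ D \ C, a < b :=
  lex_sort_iff_exists_forall_lt (hC.not_subset hD hCD) (hD.not_subset hC hCD.symm)

end Facets

theorem lex_order_is_shelling_general (u : Fin r → ℝ)
    (hmono : Monotone u)
    (Ca Ck : Finset (Fin r)) (hCa : IsFacetOf u Ca) (hCk : IsFacetOf u Ck)
    (hlt : FacetLex Ca Ck) :
    ∃ Cb : Finset (Fin r), IsFacetOf u Cb ∧ FacetLex Cb Ck ∧
      ∃ x ∈ Ck, Ca ∩ Ck ⊆ Cb ∩ Ck ∧ Cb ∩ Ck = Ck.erase x := by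
  have hak : Ca ≠ Ck := by
    rintro rfl
    exact List.lex_irrefl lt_irrefl _ hlt
  obtain ⟨s, hs, hsk⟩ := (hCa.facetLex_iff hCk hak).1 hlt
  obtain ⟨x, hx⟩ := sdiff_nonempty.2 (hCk.not_subset hCa hak.symm)
  have hsx : s < x := hsk x hx
  rw [mem_sdiff] at hs hx
  obtain ⟨Cb, hCb, hsub⟩ :=
    (hCk.1.insert_erase hs.2 hx.1 (hmono hsx.le)).exists_facet_superset
  have hsCb : s ∈ Cb := hsub (mem_insert_self _ _)
  have hbk : Cb ≠ Ck := fun h => hs.2 (h ▸ hsCb)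
  have hinter := hCk.inter_eq_erase hCb.1 hbk ((subset_insert _ _).trans hsub)
  have hkb : ∀ y ∈ Ck \ Cb, y = x := fun y hy => by
    by_contra hyx
    exact (mem_sdiff.1 hy).2 (hsub (mem_insert_of_mem (mem_erase.2 ⟨hyx, (mem_sdiff.1 hy).1⟩)))
  refine ⟨Cb, hCb, (hCb.facetLex_iff hCk hbk).2 ⟨s, mem_sdiff.2 ⟨hsCb, hs.2⟩, ?_⟩, x, hx.1, ?_,
    hinter⟩
  · exact fun y hy => hkb y hy ▸ hsx
  · rw [hinter]
    exact fun y hy => mem_erase.2 ⟨ne_of_mem_of_not_mem (mem_inter.1 hy).1 hx.2, (mem_inter.1 hy).2⟩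

/-- Let `u = (u₁,…,u_r) ∈ (0,1]^r` with `u₁ ≤ u₂ ≤ … ≤ u_r`.  The
lexicographic ordering of the facets of `Δ_u` is a shelling: for any facets `C_a ≺ C_k`
there are a facet `C_b ≺ C_k` and `x ∈ C_k` with
`C_a ∩ C_k ⊆ C_b ∩ C_k = C_k \ {x}`. -/
theorem lex_order_is_shelling (u : Fin r → ℝ)
    (hu : ∀ i, u i ∈ Set.Ioc (0 : ℝ) 1) (hmono : Monotone u)
    (Ca Ck : Finset (Fin r)) (hCa : IsFacetOf u Ca) (hCk : IsFacetOf u Ck)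
    (hlt : FacetLex Ca Ck) :
    ∃ Cb : Finset (Fin r), IsFacetOf u Cb ∧ FacetLex Cb Ck ∧
      ∃ x ∈ Ck, Ca ∩ Ck ⊆ Cb ∩ Ck ∧ Cb ∩ Ck = Ck.erase x :=
  lex_order_is_shelling_general u hmono Ca Ck hCa hCk hlt
end

section
/- Let r ≥ 1 and let D ⊆ ℝ^r be a nonempty finite union of proper linear subspaces, each containing the all-ones vector 𝟙, each of which is also invariant under scalar multiplication. Let S = {x ∈ [0,1]^r : min x_i = 0, max x_i = 1}. Then the map φ : (S \ D) × ℝ_{>0} × ℝ → ℝ^r given by φ(x, t, s) = t·x + s·𝟙 is a homeomorphism onto ℝ^r \ D. -/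
/-- Let `D ⊆ ℝ^r` be a nonempty finite union of proper linear subspaces,
each containing the all-ones vector `𝟙` (linear subspaces are automatically invariant under
scalar multiplication).  Let `S = {x ∈ [0,1]^r : min x_i = 0, max x_i = 1}`.  Then the map
`φ(x, t, s) = t·x + s·𝟙` is a homeomorphism from `(S \ D) × ℝ_{>0} × ℝ` onto `ℝ^r \ D`. -/
theorem phi_homeomorph_compl
    (r : ℕ) (hr : 1 ≤ r) (ℋ : Finset (Submodule ℝ (EuclideanSpace ℝ (Fin r))))
    (hne : ℋ.Nonempty)
    (hproper : ∀ H ∈ ℋ, H ≠ ⊤)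
    (hones : ∀ H ∈ ℋ, WithLp.toLp 2 (fun _ : Fin r => (1 : ℝ)) ∈ H) :
    letI D : Set (EuclideanSpace ℝ (Fin r)) := ⋃ H ∈ ℋ, (H : Set (EuclideanSpace ℝ (Fin r)))
    letI S : Set (EuclideanSpace ℝ (Fin r)) :=
      {x | (∀ i, x i ∈ Set.Icc (0 : ℝ) 1) ∧ (∃ i, x i = 0) ∧ (∃ i, x i = 1)}
    ∃ h : ↥(S \ D) × ↥(Set.Ioi (0 : ℝ)) × ℝ ≃ₜ ↥(Dᶜ),
      ∀ (x : ↥(S \ D)) (t : ↥(Set.Ioi (0 : ℝ))) (s : ℝ),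
        (h (x, t, s) : EuclideanSpace ℝ (Fin r)) =
          (t : ℝ) • (x : EuclideanSpace ℝ (Fin r)) +
            s • (EuclideanSpace.equiv (Fin r) ℝ).symm (fun _ => (1 : ℝ)) := by
  haveI : Nonempty (Fin r) := ⟨⟨0, hr⟩⟩
  set E := EuclideanSpace ℝ (Fin r) with hE
  set D : Set E := ⋃ H ∈ ℋ, (H : Set E) with hD
  set S : Set E := {x | (∀ i, x i ∈ Set.Icc (0 : ℝ) 1) ∧ (∃ i, x i = 0) ∧ (∃ i, x i = 1)} with hS
  set one : E := (EuclideanSpace.equiv (Fin r) ℝ).symm (fun _ => (1 : ℝ)) with hone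
  have hone_apply : ∀ i, one i = 1 := fun i => rfl
  have hcoord : ∀ (t s : ℝ) (x : E) (i : Fin r), (t • x + s • one) i = t * x i + s := by
    intro t s x i
    rw [PiLp.add_apply, PiLp.smul_apply, PiLp.smul_apply, hone_apply, smul_eq_mul, smul_eq_mul, mul_one]
  have hDmem : ∀ y : E, y ∈ D ↔ ∃ H ∈ ℋ, y ∈ H := by
    intro y; simp [D, Set.mem_iUnion]
  have hone_memH : ∀ H ∈ ℋ, one ∈ H := fun H hH => hones H hH
  -- scaling invariance
  have hscale : ∀ H ∈ ℋ, ∀ (t s : ℝ) (x : E), t ≠ 0 →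
      ((t • x + s • one) ∈ H ↔ x ∈ H) := by
    intro H hH t s x ht
    constructor
    · intro h
      have h2 : t • x ∈ H := by
        have := H.sub_mem h (H.smul_mem s (hone_memH H hH))
        simpa using this
      have := H.smul_mem t⁻¹ h2
      simpa [smul_smul, inv_mul_cancel₀ ht] using this
    · intro h
      exact H.add_mem (H.smul_mem t h) (H.smul_mem s (hone_memH H hH))
  -- max and min of coordinates
  set mx : E → ℝ := fun y => Finset.univ.sup' Finset.univ_nonempty (fun i => y i) with hmxdef
  set mn : E → ℝ := fun y => Finset.univ.inf' Finset.univ_nonempty (fun i => y i) with hmndef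
  have hmn_le : ∀ (y : E) (i : Fin r), mn y ≤ y i := fun y i => Finset.inf'_le _ (Finset.mem_univ i)
  have hle_mx : ∀ (y : E) (i : Fin r), y i ≤ mx y := fun y i => Finset.le_sup' _ (Finset.mem_univ i)
  have hex_mx : ∀ y : E, ∃ i, y i = mx y := by
    intro y
    obtain ⟨i, -, hi⟩ := Finset.exists_mem_eq_sup' (Finset.univ_nonempty) (fun i => y i)
    exact ⟨i, hi.symm⟩
  have hex_mn : ∀ y : E, ∃ i, y i = mn y := by
    intro y
    obtain ⟨i, -, hi⟩ := Finset.exists_mem_eq_inf' (Finset.univ_nonempty) (fun i => y i)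
    exact ⟨i, hi.symm⟩
  have hmx_phi : ∀ (x : E), x ∈ S → ∀ t s : ℝ, 0 < t → mx (t • x + s • one) = t + s := by
    intro x hx t s ht
    obtain ⟨hIcc, ⟨i0, h0⟩, ⟨i1, h1⟩⟩ := hx
    apply le_antisymm
    · apply Finset.sup'_le
      intro i _
      rw [hcoord]
      nlinarith [(hIcc i).2]
    · have := hle_mx (t • x + s • one) i1
      rwa [hcoord, h1, mul_one] at this
  have hmn_phi : ∀ (x : E), x ∈ S → ∀ t s : ℝ, 0 < t → mn (t • x + s • one) = s := by
    intro x hx t s ht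
    obtain ⟨hIcc, ⟨i0, h0⟩, ⟨i1, h1⟩⟩ := hx
    apply le_antisymm
    · have := hmn_le (t • x + s • one) i0
      rwa [hcoord, h0, mul_zero, zero_add] at this
    · apply Finset.le_inf'
      intro i _
      rw [hcoord]
      nlinarith [(hIcc i).1]
  have hlt : ∀ y : E, y ∉ D → mn y < mx y := by
    intro y hy
    by_contra h
    push_neg at h
    have hconst : y = mn y • one := by
      refine PiLp.ext fun i => ?_
      have h1 := hmn_le y i
      have h2 := hle_mx y i
      have h3 : y i = mn y := le_antisymm (h2.trans h) h1
      rw [PiLp.smul_apply, hone_apply, smul_eq_mul, mul_one]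
      exact h3
    obtain ⟨H, hH⟩ := hne
    exact hy ((hDmem y).2 ⟨H, hH, hconst ▸ H.smul_mem _ (hone_memH H hH)⟩)
  have hinvx_apply : ∀ (y : E) (i : Fin r),
      ((mx y - mn y)⁻¹ • (y - mn y • one)) i = (mx y - mn y)⁻¹ * (y i - mn y) := by
    intro y i
    rw [PiLp.smul_apply, PiLp.sub_apply, PiLp.smul_apply, hone_apply, smul_eq_mul, smul_eq_mul,
      mul_one]
  have hrecon : ∀ y : E, y ∉ D →
      (mx y - mn y) • ((mx y - mn y)⁻¹ • (y - mn y • one)) + mn y • one = y := by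
    intro y hy
    rw [smul_inv_smul₀ (sub_ne_zero.2 (hlt y hy).ne'), sub_add_cancel]
  have hphi_notD : ∀ (x : E), x ∉ D → ∀ (t : ℝ), t ≠ 0 → ∀ s : ℝ, t • x + s • one ∉ D := by
    intro x hx t ht s hmem
    obtain ⟨H, hH, hyH⟩ := (hDmem _).1 hmem
    exact hx ((hDmem x).2 ⟨H, hH, (hscale H hH t s x ht).1 hyH⟩)
  have hinvx_notD : ∀ y : E, y ∉ D → (mx y - mn y)⁻¹ • (y - mn y • one) ∉ D := by
    intro y hy hmem
    obtain ⟨H, hH, hxH⟩ := (hDmem _).1 hmem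
    apply hy
    refine (hDmem y).2 ⟨H, hH, ?_⟩
    have := H.add_mem (H.smul_mem (mx y - mn y) hxH) (H.smul_mem (mn y) (hone_memH H hH))
    rwa [hrecon y hy] at this
  have hinvx_S : ∀ y : E, y ∉ D → (mx y - mn y)⁻¹ • (y - mn y • one) ∈ S := by
    intro y hy
    have hpos : 0 < mx y - mn y := sub_pos.2 (hlt y hy)
    refine ⟨fun i => ?_, ?_, ?_⟩
    · rw [hinvx_apply y i]
      constructor
      · exact mul_nonneg (inv_nonneg.2 hpos.le) (sub_nonneg.2 (hmn_le y i))
      · rw [inv_mul_eq_div, div_le_one hpos]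
        exact sub_le_sub_right (hle_mx y i) _
    · obtain ⟨i, hi⟩ := hex_mn y
      exact ⟨i, by rw [hinvx_apply y i, hi, sub_self, mul_zero]⟩
    · obtain ⟨i, hi⟩ := hex_mx y
      exact ⟨i, by rw [hinvx_apply y i, hi, inv_mul_cancel₀ hpos.ne']⟩
  -- the maps
  let F : ↥(S \ D) × ↥(Set.Ioi (0:ℝ)) × ℝ → ↥(Dᶜ) := fun p =>
    ⟨(p.2.1 : ℝ) • (p.1 : E) + p.2.2 • one, hphi_notD _ p.1.2.2 _ (ne_of_gt p.2.1.2) _⟩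
  let G : ↥(Dᶜ) → ↥(S \ D) × ↥(Set.Ioi (0:ℝ)) × ℝ := fun y =>
    (⟨(mx y.1 - mn y.1)⁻¹ • (y.1 - mn y.1 • one), hinvx_S y.1 y.2, hinvx_notD y.1 y.2⟩,
     ⟨mx y.1 - mn y.1, sub_pos.2 (hlt y.1 y.2)⟩, mn y.1)
  have hFG : ∀ p, G (F p) = p := by
    rintro ⟨⟨x, hxS, hxD⟩, ⟨t, ht⟩, s⟩
    have ht' : (0:ℝ) < t := ht
    have h1 : mx (t • x + s • one) = t + s := hmx_phi x hxS t s ht'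
    have h2 : mn (t • x + s • one) = s := hmn_phi x hxS t s ht'
    refine Prod.ext ?_ (Prod.ext ?_ ?_)
    · apply Subtype.ext
      show (mx (t • x + s • one) - mn (t • x + s • one))⁻¹ •
        ((t • x + s • one) - mn (t • x + s • one) • one) = x
      rw [h1, h2, add_sub_cancel_right, add_sub_cancel_right, inv_smul_smul₀ ht'.ne']
    · apply Subtype.ext
      show mx (t • x + s • one) - mn (t • x + s • one) = t
      rw [h1, h2, add_sub_cancel_right]
    · exact h2
  have hGF : ∀ y, F (G y) = y := by
    rintro ⟨y, hy⟩
    apply Subtype.ext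
    show (mx y - mn y) • ((mx y - mn y)⁻¹ • (y - mn y • one)) + mn y • one = y
    exact hrecon y hy
  have hproj : ∀ i : Fin r, Continuous fun y : E => y i := by
    intro i
    exact (EuclideanSpace.proj (𝕜 := ℝ) i).continuous
  have hcmx : Continuous mx :=
    Continuous.finset_sup'_apply Finset.univ_nonempty (fun i _ => hproj i)
  have hcmn : Continuous mn :=
    Continuous.finset_inf'_apply Finset.univ_nonempty (fun i _ => hproj i)
  have hcF : Continuous F := by
    apply Continuous.subtype_mk
    exact ((continuous_subtype_val.comp (continuous_fst.comp continuous_snd)).smul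
        (continuous_subtype_val.comp continuous_fst)).add
        ((continuous_snd.comp continuous_snd).smul continuous_const)
  have hcG : Continuous G := by
    have hv : Continuous fun y : ↥(Dᶜ) => (y : E) := continuous_subtype_val
    have h1 : Continuous fun y : ↥(Dᶜ) => mx (y : E) - mn (y : E) :=
      (hcmx.comp hv).sub (hcmn.comp hv)
    have hne0 : ∀ y : ↥(Dᶜ), mx (y : E) - mn (y : E) ≠ 0 :=
      fun y => (sub_pos.2 (hlt y.1 y.2)).ne'
    refine Continuous.prodMk ?_ (Continuous.prodMk ?_ ?_)
    · apply Continuous.subtype_mk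
      exact (h1.inv₀ hne0).smul (hv.sub ((hcmn.comp hv).smul continuous_const))
    · exact Continuous.subtype_mk h1 _
    · exact hcmn.comp hv
  exact ⟨⟨⟨F, G, hFG, hGF⟩, hcF, hcG⟩, fun x t s => rfl⟩
end

section
/- Let n ≥ 4 and w = (1, 1, w_3, ..., w_n) ∈ (0,1]^n with ∑_{i=3}^n w_i ≤ 1. Then every w-stable n-marked genus 0 tree with marks 1 and 2 on distinct leaves is a path (has exactly two leaves), with mark 1 on one leaf and mark 2 on the other; in particular no vertex other than the two leaves carries mark 1 or 2. -/
/-!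
A leaf needs marks of total weight more than `1`, while all marks other than `1` and `2`
together weigh at most `1`; hence every leaf carries mark `1` or `2`. A tree with at least two
vertices has at least two leaves, and marks `1` and `2` sit on different vertices, so both of
these vertices are leaves.
-/

open Finset

theorem SimpleGraph.IsTree.degree_eq_one_of_leaves_eq_or_eq {V : Type*} [Fintype V]
    {G : SimpleGraph V} [DecidableRel G.Adj] (hG : G.IsTree) {a b : V} (hab : a ≠ b)
    (hleaf : ∀ v, G.degree v = 1 → v = a ∨ v = b) : G.degree a = 1 ∧ G.degree b = 1 := by
  have : Nontrivial V := ⟨a, b, hab⟩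
  obtain ⟨u, v, huv, hu, hv⟩ := hG.exists_ne_and_degree_eq_one
  rcases hleaf u hu with rfl | rfl <;> rcases hleaf v hv with rfl | rfl
  · exact absurd rfl huv
  · exact ⟨hu, hv⟩
  · exact ⟨hv, hu⟩
  · exact absurd rfl huv

lemma Fin.two_le_of_ne {n : ℕ} (hn : 2 ≤ n) {i : Fin n} (h0 : i ≠ ⟨0, by omega⟩)
    (h1 : i ≠ ⟨1, by omega⟩) : 2 ≤ (i : ℕ) := by
  by_contra! hi
  interval_cases h : (i : ℕ)
  · exact h0 (Fin.ext h)
  · exact h1 (Fin.ext h)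

/-- Let `n ≥ 4` and `w = (1, 1, w₃, …, w_n) ∈ (0,1]ⁿ` with
`∑_{i=3}^n w_i ≤ 1`.  Then every `w`-stable `n`-marked genus-0 tree carrying marks `1` and
`2` on distinct vertices is a path: it has exactly two leaves, with mark `1` on one leaf and
mark `2` on the other (in particular no other vertex carries mark `1` or `2`).  Stability
means every vertex `v` satisfies `deg v + ∑_{i ∈ m⁻¹(v)} w_i > 2`. -/
theorem stable_tree_is_path
    {n : ℕ} (hn : 4 ≤ n) (w : Fin n → ℝ)
    (hw : ∀ i, w i ∈ Set.Ioc (0 : ℝ) 1)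
    (hlight : ∑ i ∈ Finset.univ.filter (fun i : Fin n => 2 ≤ (i : ℕ)), w i ≤ 1)
    {V : Type*} [Fintype V] [DecidableEq V]
    (G : SimpleGraph V) [DecidableRel G.Adj] (htree : G.IsTree)
    (m : Fin n → V)
    (hstable : ∀ v : V,
      (2 : ℝ) < (G.degree v : ℝ) + ∑ i ∈ Finset.univ.filter (fun i => m i = v), w i)
    (h12 : m ⟨0, by omega⟩ ≠ m ⟨1, by omega⟩) :
    G.degree (m ⟨0, by omega⟩) = 1 ∧ G.degree (m ⟨1, by omega⟩) = 1 ∧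
      ∀ v : V, G.degree v = 1 → v = m ⟨0, by omega⟩ ∨ v = m ⟨1, by omega⟩ := by
  have hleaf : ∀ v : V, G.degree v = 1 → v = m ⟨0, by omega⟩ ∨ v = m ⟨1, by omega⟩ := by
    intro v hv
    by_contra! hv12
    have hfiber : univ.filter (fun i => m i = v) ⊆ univ.filter (fun i : Fin n => 2 ≤ (i : ℕ)) := by
      intro i
      simp only [mem_filter, mem_univ, true_and]
      rintro rfl
      exact Fin.two_le_of_ne (by omega) (fun h => hv12.1 (by rw [h])) (fun h => hv12.2 (by rw [h]))
    have hweight_v := sum_le_sum_of_subset_of_nonneg hfiber fun i _ _ => (hw i).1.le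
    have hstable_v := hstable v
    rw [hv, Nat.cast_one] at hstable_v
    linarith
  obtain ⟨h1, h2⟩ := htree.degree_eq_one_of_leaves_eq_or_eq h12 hleaf
  exact ⟨h1, h2, hleaf⟩
end
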